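/- Let ω = (−1 + i√3)/2 and let Q be an n×n nontrivial cube root Seidel matrix in standard form satisfying Q² = (n−1)·I + μ·Q for a real number μ. Then every eigenvalue λ of Q (i.e., every element λ of the spectrum of Q in ℂ) is an integer congruent to 2 modulo 3: there exists m ∈ ℤ with λ = m and m ≡ 2 (mod 3). -/

import Mathlib

/-- `ω = (−1 + i√3)/2`, a primitive cube root of unity. -/
noncomputable def ω3 : ℂ := (-1 + Complex.I * Real.sqrt 3) / 2

/-- A cube root Seidel matrix: self-adjoint, zero diagonal, off-diagonal
entries among the cube roots of unity. -/
def IsCubeRootSeidel {n : ℕ} (Q : Matrix (Fin n) (Fin n) ℂ) : Prop :=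
  Q.IsHermitian ∧ (∀ i, Q i i = 0) ∧
    ∀ i j, i ≠ j → Q i j = 1 ∨ Q i j = ω3 ∨ Q i j = ω3 ^ 2

/-- Standard form: every off-diagonal entry in the first row and first column
equals 1. -/
def IsStandardForm {n : ℕ} (Q : Matrix (Fin n) (Fin n) ℂ) : Prop :=
  ∀ i j : Fin n, i ≠ j → (i.val = 0 ∨ j.val = 0) → Q i j = 1

/-- Nontrivial: some off-diagonal entry is not equal to 1. -/
def IsNontrivial {n : ℕ} (Q : Matrix (Fin n) (Fin n) ℂ) : Prop :=
  ∃ i j : Fin n, i ≠ j ∧ Q i j ≠ 1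

/-!
Write the off-diagonal entries as `Q i j = ω ^ τ i j` with `τ i j : ZMod 3`; hermiticity makes `τ`
skew. Since `(ω - 1) ^ 2 = -3ω`, a sum of `N` powers `ω ^ a k` is `N + (∑ a k) (ω - 1)` modulo `3`
in `ℤ[ω]`, so if it is real, it is an integer `≡ N` and `∑ a k ≡ 0 (mod 3)`. Applied to the
off-diagonal entries of `Q ^ 2 = (n - 1) I + μ Q` this gives `μ ∈ ℤ`, `μ ≡ n - 2` and
`R i - R j ≡ n τ i j` for the row sums `R` of `τ`. In standard form row `0` of `τ` vanishes, so all
`R i ≡ 0`, and a nonzero `τ i j` forces `3 ∣ n`, hence `μ ≡ 1`. The eigenvalues are roots of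
`x ^ 2 - μ x - (n - 1)`; as `trace Q = 0` and `μ ≠ 0` the multiplicities make them rational,
hence integers `m`, and `m ^ 2 - m + 1 ≡ 0 (mod 3)` gives `m ≡ 2`.
-/

open Finset Matrix

lemma ω3_sq_add_ω3_add_one : ω3 ^ 2 + ω3 + 1 = 0 := by
  have h3 : ((√3 : ℝ) : ℂ) ^ 2 = 3 := by norm_cast; simp
  unfold ω3
  linear_combination (↑√3 ^ 2 / 4 : ℂ) * Complex.I_sq - h3 / 4

lemma ω3_pow_three : ω3 ^ 3 = 1 := by
  linear_combination (ω3 - 1) * ω3_sq_add_ω3_add_one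

lemma ω3_re : ω3.re = -1 / 2 := by simp [ω3]

lemma ω3_im : ω3.im = √3 / 2 := by simp [ω3]

lemma eq_zero_and_eq_of_ofReal_eq_add_mul_ω3 {x : ℝ} {c d : ℤ} (h : (x : ℂ) = c + d * ω3) :
    d = 0 ∧ x = c := by
  have hre := congrArg Complex.re h
  have him := congrArg Complex.im h
  simp only [Complex.ofReal_re, Complex.ofReal_im, Complex.add_re, Complex.add_im,
    Complex.mul_re, Complex.mul_im, Complex.intCast_re, Complex.intCast_im, ω3_re, ω3_im] at hre him
  have hd : (d : ℝ) = 0 := by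
    have : (0 : ℝ) < √3 := by positivity
    nlinarith
  refine ⟨by exact_mod_cast hd, ?_⟩
  rw [hre, hd]
  ring

noncomputable def cubeRootChar : AddChar (ZMod 3) ℂ := AddChar.zmodChar 3 ω3_pow_three

lemma cubeRootChar_natCast (k : ℕ) : cubeRootChar k = ω3 ^ k :=
  AddChar.zmodChar_apply' ω3_pow_three k

lemma exists_cubeRootChar_eq_intCast_add_mul_ω3 (a : ZMod 3) : ∃ c d : ℤ,
    cubeRootChar a = c + d * ω3 ∧ ((c + d : ℤ) : ZMod 3) = 1 ∧ ((d : ℤ) : ZMod 3) = a := by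
  rw [cubeRootChar, AddChar.zmodChar_apply]
  fin_cases a
  · exact ⟨1, 0, by simp [ZMod.val], rfl, rfl⟩
  · exact ⟨0, 1, by simp [ZMod.val], rfl, rfl⟩
  · exact ⟨-1, -1, by simp [ZMod.val]; linear_combination ω3_sq_add_ω3_add_one, rfl, rfl⟩

theorem exists_int_of_sum_cubeRootChar_eq_ofReal {ι : Type*} (s : Finset ι) (a : ι → ZMod 3)
    {x : ℝ} (h : ∑ k ∈ s, cubeRootChar (a k) = x) :
    ∃ m : ℤ, x = m ∧ (m : ZMod 3) = #s ∧ ∑ k ∈ s, a k = 0 := by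
  choose c d hψ hcd hd using fun k => exists_cubeRootChar_eq_intCast_add_mul_ω3 (a k)
  have hsum : (x : ℂ) = ((∑ k ∈ s, c k : ℤ) : ℂ) + ((∑ k ∈ s, d k : ℤ) : ℂ) * ω3 := by
    rw [← h]
    push_cast
    rw [sum_mul, ← sum_add_distrib]
    exact sum_congr rfl fun k _ => hψ k
  obtain ⟨hD, hx⟩ := eq_zero_and_eq_of_ofReal_eq_add_mul_ω3 hsum
  have hD3 : ∑ k ∈ s, (d k : ZMod 3) = 0 := by exact_mod_cast congrArg (Int.cast : ℤ → ZMod 3) hD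
  refine ⟨_, hx, ?_, ?_⟩
  · have : ∑ k ∈ s, ((c k + d k : ℤ) : ZMod 3) = #s := by simp [hcd]
    push_cast at this ⊢
    rwa [sum_add_distrib, hD3, add_zero] at this
  · simpa [hd] using hD3

lemma cubeRootChar_injective : Function.Injective cubeRootChar := by
  refine AddChar.injective_iff.mpr fun a ha => ?_
  obtain ⟨-, -, -, h⟩ := exists_int_of_sum_cubeRootChar_eq_ofReal (univ : Finset Unit) (fun _ => a)
    (x := 1) (by simpa using ha)
  simpa using h

lemma exists_cubeRootChar_eq {c : ℂ} (hc : c = 1 ∨ c = ω3 ∨ c = ω3 ^ 2) :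
    ∃ t : ZMod 3, cubeRootChar t = c := by
  rcases hc with rfl | rfl | rfl
  · exact ⟨0, AddChar.map_zero_eq_one _⟩
  · exact ⟨1, by simpa using cubeRootChar_natCast 1⟩
  · exact ⟨2, by simpa using cubeRootChar_natCast 2⟩

noncomputable def seidelOfExponents {ι : Type*} [DecidableEq ι] (τ : Matrix ι ι (ZMod 3)) :
    Matrix ι ι ℂ :=
  of fun i j => if i = j then 0 else cubeRootChar (τ i j)

lemma IsCubeRootSeidel.exists_eq_seidelOfExponents {n : ℕ} {Q : Matrix (Fin n) (Fin n) ℂ}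
    (hQ : IsCubeRootSeidel Q) :
    ∃ τ : Matrix (Fin n) (Fin n) (ZMod 3),
      (∀ i, τ i i = 0) ∧ τᵀ = -τ ∧ Q = seidelOfExponents τ := by
  obtain ⟨hherm, hdiag, hvals⟩ := hQ
  have hτ : ∀ i j, ∃ t : ZMod 3, (i = j → t = 0) ∧ (i ≠ j → cubeRootChar t = Q i j) := by
    intro i j
    by_cases hij : i = j
    · exact ⟨0, fun _ => rfl, fun h => absurd hij h⟩
    · obtain ⟨t, ht⟩ := exists_cubeRootChar_eq (hvals i j hij)
      exact ⟨t, fun h => absurd h hij, fun _ => ht⟩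
  choose τ hτdiag hτQ using hτ
  refine ⟨of τ, fun i => hτdiag i i rfl, ?_, ?_⟩
  · ext i j
    by_cases hij : i = j
    · subst hij; simp [hτdiag]
    · apply cubeRootChar_injective
      rw [transpose_apply, neg_apply, of_apply, of_apply, AddChar.map_neg_eq_conj, hτQ i j hij,
        hτQ j i (Ne.symm hij), ← hherm.apply j i, RCLike.star_def]
  · ext i j
    by_cases hij : i = j
    · simp [seidelOfExponents, hij, hdiag]
    · simp [seidelOfExponents, hij, hτQ i j hij]

section Exponents

variable {ι : Type*} [Fintype ι] [DecidableEq ι]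

lemma seidelOfExponents_sq_apply_of_ne (τ : Matrix ι ι (ZMod 3)) {i j : ι} (hij : i ≠ j) :
    (seidelOfExponents τ ^ 2) i j = ∑ k ∈ {i, j}ᶜ, cubeRootChar (τ i k + τ k j) := by
  rw [sq, mul_apply, ← sum_compl_add_sum {i, j}, sum_pair hij]
  simp only [seidelOfExponents, of_apply, if_neg hij, ↓reduceIte, zero_mul, mul_zero, add_zero]
  refine sum_congr rfl fun k hk => ?_
  have hk' : k ≠ i ∧ k ≠ j := by simpa [not_or] using hk
  rw [if_neg (Ne.symm hk'.1), if_neg hk'.2, AddChar.map_add_eq_mul]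

lemma exists_int_of_sq_apply_eq_mul_apply (τ : Matrix ι ι (ZMod 3)) {μ : ℝ} {i j : ι}
    (hij : i ≠ j) (h : (seidelOfExponents τ ^ 2) i j = μ * seidelOfExponents τ i j) :
    ∃ m : ℤ, μ = m ∧ (m : ZMod 3) = Fintype.card ι - 2 ∧
      ∑ k ∈ {i, j}ᶜ, (τ i k + τ k j - τ i j) = 0 := by
  have hsum : ∑ k ∈ {i, j}ᶜ, cubeRootChar (τ i k + τ k j - τ i j) = μ := by
    simp_rw [AddChar.map_sub_eq_div, ← sum_div, ← seidelOfExponents_sq_apply_of_ne τ hij, h,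
      seidelOfExponents, of_apply, if_neg hij]
    exact mul_div_cancel_right₀ _ (cubeRootChar.val_isUnit _).ne_zero
  obtain ⟨m, hμ, hcard, hτ⟩ := exists_int_of_sum_cubeRootChar_eq_ofReal _ _ hsum
  refine ⟨m, hμ, ?_, hτ⟩
  rw [hcard, card_compl, card_pair hij, Nat.cast_sub (card_pair hij ▸ card_le_univ _)]
  rfl

end Exponents

section SkewRowSums

variable {ι R : Type*} [Fintype ι] [DecidableEq ι] [CommRing R] {τ : Matrix ι ι R}

lemma sum_compl_pair_eq_rowSum_sub_rowSum (hdiag : ∀ i, τ i i = 0) (hτ : τᵀ = -τ) {i j : ι}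
    (hij : i ≠ j) :
    ∑ k ∈ {i, j}ᶜ, (τ i k + τ k j - τ i j) =
      ∑ k, τ i k - ∑ k, τ j k - Fintype.card ι * τ i j := by
  have hcol : ∑ k, τ k j = -∑ k, τ j k := by
    rw [← sum_neg_distrib]
    exact sum_congr rfl fun k _ => by simpa using congrFun (congrFun hτ j) k
  have hall : ∑ k, (τ i k + τ k j - τ i j) = ∑ k, τ i k - ∑ k, τ j k - Fintype.card ι * τ i j := by
    rw [sum_sub_distrib, sum_add_distrib, hcol, sum_const, card_univ, nsmul_eq_mul]
    ring
  rw [← hall, ← sum_compl_add_sum {i, j}, sum_pair hij, hdiag i, hdiag j]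
  ring

lemma natCast_card_eq_zero_of_rowSum_sub_rowSum [NoZeroDivisors R] {i₀ : ι}
    (hrow : ∀ k, τ i₀ k = 0)
    (hsum : ∀ i j, i ≠ j → ∑ k, τ i k - ∑ k, τ j k = Fintype.card ι * τ i j)
    {i j : ι} (hij : i ≠ j) (hne : τ i j ≠ 0) : (Fintype.card ι : R) = 0 := by
  have hzero : ∀ j, ∑ k, τ j k = 0 := by
    intro j
    by_cases hj : j = i₀
    · simp [hj, hrow]
    · simpa [hrow] using hsum i₀ j (Ne.symm hj)
  have := hsum i j hij
  rw [hzero, hzero, sub_zero, eq_comm] at this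
  exact (mul_eq_zero.mp this).resolve_right hne

end SkewRowSums

lemma natCast_card_eq_zero_and_exists_int_of_sq_apply_eq {ι : Type*} [Fintype ι] [DecidableEq ι]
    {τ : Matrix ι ι (ZMod 3)} (hdiag : ∀ i, τ i i = 0) (hskew : τᵀ = -τ) {μ : ℝ}
    (hoff : ∀ i j, i ≠ j → (seidelOfExponents τ ^ 2) i j = μ * seidelOfExponents τ i j)
    {i₀ : ι} (hrow : ∀ k, τ i₀ k = 0) {i j : ι} (hij : i ≠ j) (hne : τ i j ≠ 0) :
    (Fintype.card ι : ZMod 3) = 0 ∧ ∃ M : ℤ, μ = M ∧ (M : ZMod 3) = 1 := by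
  have hrows : ∀ i j, i ≠ j → ∑ k, τ i k - ∑ k, τ j k = Fintype.card ι * τ i j := by
    intro i j hij
    obtain ⟨-, -, -, h⟩ := exists_int_of_sq_apply_eq_mul_apply τ hij (hoff i j hij)
    rw [sum_compl_pair_eq_rowSum_sub_rowSum hdiag hskew hij] at h
    linear_combination h
  have hcard := natCast_card_eq_zero_of_rowSum_sub_rowSum hrow hrows hij hne
  obtain ⟨M, hμ, hM, -⟩ := exists_int_of_sq_apply_eq_mul_apply τ hij (hoff i j hij)
  exact ⟨hcard, M, hμ, by rw [hM, hcard]; rfl⟩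

lemma Multiset.exists_sum_eq_nsmul_add_nsmul {M : Type*} [AddCommMonoid M] {s : Multiset M}
    {a b : M} (h : ∀ x ∈ s, x = a ∨ x = b) :
    ∃ p q : ℕ, p + q = Multiset.card s ∧ s.sum = p • a + q • b := by
  induction s using Multiset.induction_on with
  | empty => exact ⟨0, 0, by simp⟩
  | cons x s ih =>
    obtain ⟨p, q, hcard, hsum⟩ := ih fun y hy => h y (Multiset.mem_cons_of_mem hy)
    rcases h x (Multiset.mem_cons_self x s) with rfl | rfl
    · exact ⟨p + 1, q, by simp [← hcard]; ring, by simp [hsum, add_smul]; abel⟩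
    · exact ⟨p, q + 1, by simp [← hcard]; ring, by simp [hsum, add_smul]; abel⟩

open Polynomial in
lemma sq_eq_of_mem_spectrum {K A : Type*} [Field K] [Ring A] [Algebra K A] {a : A} {c μ : K}
    (ha : a ^ 2 = c • 1 + μ • a) {r : K} (hr : r ∈ spectrum K a) : r ^ 2 = c + μ * r := by
  have hp := spectrum.subset_polynomial_aeval a (X ^ 2 - C μ * X - C c) ⟨r, hr, rfl⟩
  have h0 : aeval a (X ^ 2 - C μ * X - C c) = 0 := by
    simp only [map_sub, map_mul, map_pow, aeval_X, aeval_C, ha, Algebra.algebraMap_eq_smul_one,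
      smul_one_mul]
    abel
  rw [h0, spectrum.mem_iff, sub_zero] at hp
  have hroot : eval r (X ^ 2 - C μ * X - C c) = 0 :=
    not_not.mp fun hne => hp ((isUnit_iff_ne_zero.mpr hne).map _)
  simp only [eval_sub, eval_pow, eval_mul, eval_X, eval_C] at hroot
  linear_combination hroot

theorem exists_ratCast_of_mem_spectrum {K ι : Type*} [Field K] [IsAlgClosed K] [CharZero K]
    [Fintype ι] [DecidableEq ι] {A : Matrix ι ι K} (htr : A.trace = 0) {c : K} {μ : ℚ}
    (hμ : μ ≠ 0) (hA : A ^ 2 = c • 1 + (μ : K) • A) {r : K} (hr : r ∈ spectrum K A) :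
    ∃ q : ℚ, r = q := by
  have hmem : ∀ x, x ∈ A.charpoly.roots ↔ x ∈ spectrum K A := fun x => by
    rw [mem_spectrum_iff_isRoot_charpoly, Polynomial.mem_roots A.charpoly_monic.ne_zero]
  have hroots : ∀ x ∈ A.charpoly.roots, x = r ∨ x = μ - r := by
    intro x hx
    have : (x - r) * (x - (μ - r)) = 0 := by
      linear_combination
        sq_eq_of_mem_spectrum hA ((hmem x).mp hx) - sq_eq_of_mem_spectrum hA hr
    simpa [sub_eq_zero] using this
  obtain ⟨p, q, hcard, hsum⟩ := Multiset.exists_sum_eq_nsmul_add_nsmul hroots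
  rw [← trace_eq_sum_roots_charpoly, htr, nsmul_eq_mul, nsmul_eq_mul] at hsum
  have hpq : (p : ℚ) - q ≠ 0 := by
    rw [sub_ne_zero, Ne, Nat.cast_inj]
    rintro rfl
    have hp : (p : K) * μ = 0 := by linear_combination -hsum
    have hp0 : p = 0 := by simpa [hμ] using hp
    have := Multiset.card_pos_iff_exists_mem.mpr ⟨r, (hmem r).mpr hr⟩
    omega
  refine ⟨-(q * μ) / (p - q), ?_⟩
  push_cast
  rw [eq_div_iff (by exact_mod_cast hpq)]
  linear_combination -hsum

open Polynomial in
lemma Rat.exists_int_eq_of_sq_eq {q : ℚ} {a b : ℤ} (h : q ^ 2 = a * q + b) : ∃ m : ℤ, q = m := by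
  have hmonic : (X ^ 2 - C a * X - C b : ℤ[X]).Monic := by monicity!
  obtain ⟨m, hm⟩ := isInteger_of_is_root_of_monic hmonic (r := q) (by
    simp only [map_sub, map_mul, map_pow, aeval_X, eq_intCast, map_intCast]
    linear_combination h)
  exact ⟨m, by simp [← hm]⟩

lemma Int.emod_three_eq_two_of_sq_eq {m M N : ℤ} (h : m ^ 2 = M * m + N) (hM : (M : ZMod 3) = 1)
    (hN : (N : ZMod 3) = -1) : m % 3 = 2 := by
  have h3 : (m : ZMod 3) ^ 2 - m + 1 = 0 := by
    have := congrArg (Int.cast : ℤ → ZMod 3) h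
    push_cast [hM, hN] at this
    linear_combination this
  have hm : (m : ZMod 3) = 2 := by
    generalize (m : ZMod 3) = x at h3
    revert x
    decide
  have := (ZMod.intCast_eq_intCast_iff' m 2 3).mp (by simpa using hm)
  omega

theorem exists_int_emod_three_eq_two_of_mem_spectrum {ι : Type*} [Fintype ι] [DecidableEq ι]
    {A : Matrix ι ι ℂ} (htr : A.trace = 0) {M N : ℤ} (hM : (M : ZMod 3) = 1)
    (hN : (N : ZMod 3) = -1) (hA : A ^ 2 = (N : ℂ) • 1 + (M : ℂ) • A) {r : ℂ}
    (hr : r ∈ spectrum ℂ A) : ∃ m : ℤ, r = m ∧ m % 3 = 2 := by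
  have hM0 : (M : ℚ) ≠ 0 := by
    norm_cast
    rintro rfl
    simp at hM
  have hA' : A ^ 2 = (N : ℂ) • 1 + ((M : ℚ) : ℂ) • A := by simpa using hA
  obtain ⟨q, rfl⟩ := exists_ratCast_of_mem_spectrum htr hM0 hA' hr
  have hq : q ^ 2 = M * q + N := by
    exact_mod_cast (sq_eq_of_mem_spectrum hA hr).trans (add_comm _ _)
  obtain ⟨m, rfl⟩ := Rat.exists_int_eq_of_sq_eq hq
  exact ⟨m, by push_cast; rfl, Int.emod_three_eq_two_of_sq_eq (by exact_mod_cast hq) hM hN⟩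

theorem cubeRootSeidel_eigenvalues_integer_mod_three
    (n : ℕ) (Q : Matrix (Fin n) (Fin n) ℂ) (μ : ℝ)
    (hQ : IsCubeRootSeidel Q) (hsf : IsStandardForm Q) (hnt : IsNontrivial Q)
    (heq : Q ^ 2 = ((n : ℂ) - 1) • (1 : Matrix (Fin n) (Fin n) ℂ) + (μ : ℂ) • Q) :
    ∀ lam ∈ spectrum ℂ Q, ∃ m : ℤ, lam = (m : ℂ) ∧ m % 3 = 2 := by
  obtain ⟨τ, hdiag, hskew, rfl⟩ := hQ.exists_eq_seidelOfExponents
  have hoff : ∀ i j, i ≠ j →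
      (seidelOfExponents τ ^ 2) i j = μ * seidelOfExponents τ i j := fun i j hij => by
    simp [heq, one_apply_ne hij]
  obtain ⟨i, j, hij, hne⟩ := hnt
  have hτij : τ i j ≠ 0 := fun h => hne (by simp [seidelOfExponents, hij, h])
  have hrow₀ : ∀ k, τ ⟨0, i.pos⟩ k = 0 := by
    intro k
    by_cases hk : ⟨0, i.pos⟩ = k
    · exact hk ▸ hdiag k
    · apply cubeRootChar_injective
      simpa [seidelOfExponents, hk] using hsf _ k hk (Or.inl rfl)
  obtain ⟨hn, M, rfl, hM⟩ :=
    natCast_card_eq_zero_and_exists_int_of_sq_apply_eq hdiag hskew hoff hrow₀ hij hτij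
  rw [Fintype.card_fin] at hn
  intro lam hlam
  exact exists_int_emod_three_eq_two_of_mem_spectrum (N := n - 1)
    (by simp [trace, seidelOfExponents]) hM (by push_cast [hn]; ring) (by simpa using heq) hlam
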